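/- Let T be a totally ordered set, 𝔽 a field, and I ⊆ T an interval. Then rad(C(I)), the image of the canonical map overline(C(I)) → C(I), is isomorphic to C(rad(I)), where rad(I) = I ∩ overline(I) (and C(∅) = 0). -/

import Mathlib

open CategoryTheory CategoryTheory.Limits

set_option maxHeartbeats 1000000
set_option synthInstance.maxHeartbeats 200000

/-- A persistence module over a totally ordered set `T`: a functor from `T` (viewed as a
category via its order) to the category of `F`-vector spaces. -/
abbrev PersistenceModule (F : Type) [Field F] (T : Type) [LinearOrder T] :=
  T ⥤ ModuleCat.{0} F

variable (F : Type) [Field F] (T : Type) [LinearOrder T]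

/-- The inclusion functor of the strict up-set of `t` into `T`. -/
def upFunctor (t : T) : {s : T // t < s} ⥤ T :=
  Monotone.functor (f := (Subtype.val : {s : T // t < s} → T)) (fun _ _ h => h)

/-- The inclusion functor of the strict down-set of `t` into `T`. -/
def downFunctor (t : T) : {s : T // s < t} ⥤ T :=
  Monotone.functor (f := (Subtype.val : {s : T // s < t} → T)) (fun _ _ h => h)

/-- `underline M`, with `(underline M)_t = lim_{s > t} M_s` (the limit over the empty
category being `0`). -/
noncomputable def underlinePM (M : PersistenceModule F T) : PersistenceModule F T where
  obj t := limit (upFunctor T t ⋙ M)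
  map {s t} f := limit.lift (upFunctor T t ⋙ M)
    { pt := limit (upFunctor T s ⋙ M)
      π :=
        { app := fun u => limit.π (upFunctor T s ⋙ M) ⟨u.1, lt_of_le_of_lt (leOfHom f) u.2⟩
          naturality := fun u v g => by
            exact (Category.id_comp _).trans
              (limit.w (upFunctor T s ⋙ M) (homOfLE (leOfHom g))).symm } }
  map_id t := by
    apply limit.hom_ext
    intro u
    simp
  map_comp {s t u} f g := by
    apply limit.hom_ext
    intro v
    simp
    refine Eq.symm ?_
    exact limit.lift_π _ _

/-- `overline M`, with `(overline M)_t = colim_{s < t} M_s` (the colimit over the empty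
category being `0`). -/
noncomputable def overlinePM (M : PersistenceModule F T) : PersistenceModule F T where
  obj t := colimit (downFunctor T t ⋙ M)
  map {s t} f := colimit.desc (downFunctor T s ⋙ M)
    { pt := colimit (downFunctor T t ⋙ M)
      ι :=
        { app := fun u => colimit.ι (downFunctor T t ⋙ M) ⟨u.1, lt_of_lt_of_le u.2 (leOfHom f)⟩
          naturality := fun u v g => by
            refine Eq.trans ?_ (Category.comp_id _).symm
            have h : (⟨u.1, lt_of_lt_of_le u.2 (leOfHom f)⟩ : {x : T // x < t}) ⟶
                ⟨v.1, lt_of_lt_of_le v.2 (leOfHom f)⟩ := homOfLE (leOfHom g)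
            exact colimit.w (downFunctor T t ⋙ M) h } }
  map_id t := by
    apply colimit.hom_ext
    intro u
    simp
  map_comp {s t u} f g := by
    apply colimit.hom_ext
    intro v
    simp
    refine Eq.symm ?_
    exact colimit.ι_desc _ _

/-- The canonical morphism `M ⟶ underline M` given by the universal property of the limits. -/
noncomputable def toUnderline (M : PersistenceModule F T) : M ⟶ underlinePM F T M where
  app t := limit.lift (upFunctor T t ⋙ M)
    { pt := M.obj t
      π :=
        { app := fun u => M.map (homOfLE u.2.le)
          naturality := fun u v g => by
            dsimp
            rw [Category.id_comp, ← M.map_comp]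
            rfl } }
  naturality s t f := by
    apply limit.hom_ext
    intro u
    simp only [underlinePM, Category.assoc, limit.lift_π, ← M.map_comp]
    refine Eq.symm ?_
    exact limit.lift_π _ _

/-- The canonical morphism `overline M ⟶ M` given by the universal property of the colimits. -/
noncomputable def fromOverline (M : PersistenceModule F T) : overlinePM F T M ⟶ M where
  app t := colimit.desc (downFunctor T t ⋙ M)
    { pt := M.obj t
      ι :=
        { app := fun u => M.map (homOfLE u.2.le)
          naturality := fun u v g => by
            dsimp
            rw [Category.comp_id, ← M.map_comp]
            rfl } }
  naturality s t f := by
    apply colimit.hom_ext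
    intro u
    simp only [overlinePM, colimit.ι_desc_assoc, colimit.ι_desc, ← M.map_comp]
    exact colimit.ι_desc _ _

/-- `M` is upper semi-continuous if the canonical map `M_t → lim_{s > t} M_s` is an
isomorphism for all `t`. -/
noncomputable def IsUSC (M : PersistenceModule F T) : Prop :=
  ∀ t : T, IsIso ((toUnderline F T M).app t)

/-- `M` is lower semi-continuous if the canonical map `colim_{s < t} M_s → M_t` is an
isomorphism for all `t`. -/
noncomputable def IsLSC (M : PersistenceModule F T) : Prop :=
  ∀ t : T, IsIso ((fromOverline F T M).app t)

/-- `M` is ephemeral if all structure maps `M_{s,t}` with `s < t` vanish. -/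
def Ephemeral (M : PersistenceModule F T) : Prop :=
  ∀ s t : T, ∀ h : s < t, M.map (homOfLE h.le) = 0

/-- `M` is q-tame if all structure maps `M_{s,t}` with `s < t` have finite rank. -/
def QTame (M : PersistenceModule F T) : Prop :=
  ∀ s t : T, ∀ h : s < t, Module.Finite F (LinearMap.range (M.map (homOfLE h.le)).hom)

/-- A morphism of persistence modules is a weak isomorphism if its kernel and cokernel
are ephemeral. -/
noncomputable def IsWeakIso {M N : PersistenceModule F T} (φ : M ⟶ N) : Prop :=
  Ephemeral F T (kernel φ) ∧ Ephemeral F T (cokernel φ)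

open Classical

/-- The interval module `C(I)`: the field `F` at points of `I` with identity structure
maps inside `I`, and `0` elsewhere (in particular `C(∅) = 0`). -/
noncomputable def intervalModule (I : Set T) : PersistenceModule F T where
  obj t := ModuleCat.of F (↥(if t ∈ I then (⊤ : Submodule F F) else (⊥ : Submodule F F)))
  map {s t} f :=
    if h : Set.Icc s t ⊆ I then
      ModuleCat.ofHom (Submodule.inclusion (by
        rw [if_pos (h (Set.right_mem_Icc.mpr (leOfHom f)))]
        exact le_top) : ↥(if s ∈ I then (⊤ : Submodule F F) else (⊥ : Submodule F F)) →ₗ[F]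
          ↥(if t ∈ I then (⊤ : Submodule F F) else (⊥ : Submodule F F)))
    else 0
  map_id t := by
    by_cases ht : t ∈ I
    · rw [dif_pos (by simpa using ht)]
      rfl
    · have h : ¬ Set.Icc t t ⊆ I := by simpa using ht
      rw [dif_neg h]
      have hs : Subsingleton (↥(if t ∈ I then (⊤ : Submodule F F) else (⊥ : Submodule F F))) := by
        rw [if_neg ht]
        infer_instance
      apply ModuleCat.hom_ext
      apply LinearMap.ext
      intro x
      exact @Subsingleton.elim _ hs _ _
  map_comp {s t u} f g := by
    by_cases h : Set.Icc s u ⊆ I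
    · have h1 : Set.Icc s t ⊆ I :=
        fun x hx => h ⟨hx.1, le_trans hx.2 (leOfHom g)⟩
      have h2 : Set.Icc t u ⊆ I :=
        fun x hx => h ⟨le_trans (leOfHom f) hx.1, hx.2⟩
      rw [dif_pos h, dif_pos h1, dif_pos h2]
      rfl
    · rw [dif_neg h]
      by_cases h1 : Set.Icc s t ⊆ I
      · have h2 : ¬ Set.Icc t u ⊆ I := fun h2 => h (by
          intro x hx
          rcases le_total x t with hxt | htx
          · exact h1 ⟨hx.1, hxt⟩
          · exact h2 ⟨htx, hx.2⟩)
        rw [dif_pos h1, dif_neg h2, Limits.comp_zero]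
      · rw [dif_neg h1, Limits.zero_comp]

/-- Functoriality of `overline` on morphisms. -/
noncomputable def overlineMap {M N : PersistenceModule F T} (φ : M ⟶ N) :
    overlinePM F T M ⟶ overlinePM F T N where
  app t := colimMap (Functor.whiskerLeft (downFunctor T t) φ)
  naturality s t f := by
    apply colimit.hom_ext
    intro u
    simp [overlinePM]
    exact ι_colimMap (Functor.whiskerLeft (downFunctor T t) φ) ⟨u.1, lt_of_lt_of_le u.2 (leOfHom f)⟩

/-- Functoriality of `underline` on morphisms. -/
noncomputable def underlineMap {M N : PersistenceModule F T} (φ : M ⟶ N) :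
    underlinePM F T M ⟶ underlinePM F T N where
  app t := limMap (Functor.whiskerLeft (upFunctor T t) φ)
  naturality s t f := by
    apply limit.hom_ext
    intro u
    simp [underlinePM]
    exact (limMap_π (Functor.whiskerLeft (upFunctor T s) φ) ⟨u.1, lt_of_le_of_lt (leOfHom f) u.2⟩).symm

/-- The radical of a persistence module: the image of the canonical morphism
`overline M ⟶ M`. -/
noncomputable def radPM (M : PersistenceModule F T) : PersistenceModule F T :=
  image (fromOverline F T M)

/-- The canonical morphism from the direct sum to the product of a collection of
persistence modules. -/
noncomputable def sumToProd {A : Type} (M : A → PersistenceModule F T) :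
    (∐ M) ⟶ (∏ᶜ M) :=
  Sigma.desc fun a => Pi.lift fun b =>
    if h : a = b then eqToHom (congrArg M h) else 0

/-- The pointwise dual persistence module `M*`, indexed by the opposite order. -/
noncomputable def dualPM (M : PersistenceModule F T) : PersistenceModule F Tᵒᵈ where
  obj t := ModuleCat.of F (Module.Dual F (M.obj (OrderDual.ofDual t)))
  map {s t} f :=
    ModuleCat.ofHom (M.map (homOfLE (leOfHom f : OrderDual.ofDual t ≤ OrderDual.ofDual s))).hom.dualMap
  map_id t := by
    rw [show (homOfLE _ : OrderDual.ofDual t ⟶ OrderDual.ofDual t) = 𝟙 _ from rfl,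
      M.map_id]
    rfl
  map_comp {s t u} f g := by
    rw [show (homOfLE _ : OrderDual.ofDual u ⟶ OrderDual.ofDual s) =
        (homOfLE (leOfHom g : OrderDual.ofDual u ≤ OrderDual.ofDual t)) ≫
        (homOfLE (leOfHom f : OrderDual.ofDual t ≤ OrderDual.ofDual s)) from rfl,
      M.map_comp]
    rfl

/-- `I` is an interval in a totally ordered set: if `s ≤ t ≤ u` with `s, u ∈ I`, then `t ∈ I`. -/
def IsInterval {T : Type*} [LinearOrder T] (I : Set T) : Prop :=
  ∀ ⦃s t u : T⦄, s ≤ t → t ≤ u → s ∈ I → u ∈ I → t ∈ I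

/-- `underline I`: the set of `t` such that `I ∩ {s | t < s}` is nonempty and coinitial
in `{s | t < s}`. -/
def underlineSet {T : Type*} [LinearOrder T] (I : Set T) : Set T :=
  {t | (I ∩ Set.Ioi t).Nonempty ∧ ∀ s ∈ Set.Ioi t, ∃ u ∈ I ∩ Set.Ioi t, u ≤ s}

/-- `overline I`: the set of `t` such that `I ∩ {s | s < t}` is nonempty and cofinal
in `{s | s < t}`. -/
def overlineSet {T : Type*} [LinearOrder T] (I : Set T) : Set T :=
  {t | (I ∩ Set.Iio t).Nonempty ∧ ∀ s ∈ Set.Iio t, ∃ u ∈ I ∩ Set.Iio t, s ≤ u}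

/-- `rad I = I ∩ overline I`. -/
def radSet {T : Type*} [LinearOrder T] (I : Set T) : Set T :=
  I ∩ overlineSet I

/-!
The canonical map `overline C(I) ⟶ C(I)` factors as `overline C(I) ⟶ C(rad I) ⟶ C(I)`. Indeed,
at `t` it is assembled from the structure maps `C(I)_s ⟶ C(I)_t`, `s < t`, and such a map is
nonzero only if `[s, t] ⊆ I`, which forces `t ∈ rad I`. The second map is pointwise injective.
The first is pointwise surjective: for `t ∈ rad I` the interval `I` contains some `[s, t]`
with `s < t`, and the leg at `s` is already onto. Hence `C(rad I)` is the image.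
-/

section RadSet

variable {α : Type*} [LinearOrder α] {I : Set α} {s t : α}

lemma radSet_subset (I : Set α) : radSet I ⊆ I :=
  Set.inter_subset_left

lemma mem_radSet_of_Icc_subset (hst : s < t) (h : Set.Icc s t ⊆ I) : t ∈ radSet I := by
  have hs : s ∈ I := h (Set.left_mem_Icc.mpr hst.le)
  refine ⟨h (Set.right_mem_Icc.mpr hst.le), ⟨s, hs, hst⟩, fun v hv => ?_⟩
  rcases lt_or_ge v s with hvs | hsv
  · exact ⟨s, ⟨hs, hst⟩, hvs.le⟩
  · exact ⟨v, ⟨h ⟨hsv, le_of_lt hv⟩, hv⟩, le_rfl⟩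

lemma exists_Icc_subset_of_mem_radSet (hI : IsInterval I) (ht : t ∈ radSet I) :
    ∃ s < t, Set.Icc s t ⊆ I := by
  obtain ⟨htI, ⟨s, hsI, hst⟩, -⟩ := ht
  exact ⟨s, hst, fun x hx => hI hx.1 hx.2 hsI htI⟩

lemma Icc_subset_radSet (hs : s ∈ radSet I) (h : Set.Icc s t ⊆ I) : Set.Icc s t ⊆ radSet I := by
  intro u hu
  rcases eq_or_lt_of_le hu.1 with rfl | hsu
  · exact hs
  · exact mem_radSet_of_Icc_subset hsu fun x hx => h ⟨hx.1, hx.2.trans hu.2⟩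

end RadSet

def NatTrans.liftOfMonoApp {C D : Type*} [Category C] [Category D] {X M N : C ⥤ D}
    (m : N ⟶ M) [∀ c, Mono (m.app c)] (f : X ⟶ M) (p : ∀ c, X.obj c ⟶ N.obj c)
    (hp : ∀ c, p c ≫ m.app c = f.app c) : X ⟶ N where
  app := p
  naturality c d g := by
    rw [← cancel_mono (m.app d), Category.assoc, hp, f.naturality, ← hp, Category.assoc,
      Category.assoc, m.naturality]

@[simp]
lemma NatTrans.liftOfMonoApp_comp {C D : Type*} [Category C] [Category D] {X M N : C ⥤ D}
    (m : N ⟶ M) [∀ c, Mono (m.app c)] (f : X ⟶ M) (p : ∀ c, X.obj c ⟶ N.obj c)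
    (hp : ∀ c, p c ≫ m.app c = f.app c) : liftOfMonoApp m f p hp ≫ m = f :=
  NatTrans.ext (funext hp)

lemma intervalModule_obj_isZero (I : Set T) {t : T} (ht : t ∉ I) :
    IsZero ((intervalModule F T I).obj t) := by
  rw [ModuleCat.isZero_iff_subsingleton]
  dsimp only [intervalModule]
  rw [if_neg ht]
  infer_instance

lemma ite_top_bot_le_ite_top_bot {β : Type*} [Preorder β] [BoundedOrder β] {p q : Prop}
    [Decidable p] [Decidable q] (h : p → q) :
    (if p then (⊤ : β) else ⊥) ≤ if q then ⊤ else ⊥ := by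
  split_ifs <;> simp_all

noncomputable def intervalModuleInclusion {I J : Set T} (hJI : J ⊆ I)
    (hJ : ∀ ⦃s t⦄, s ∈ J → Set.Icc s t ⊆ I → Set.Icc s t ⊆ J) :
    intervalModule F T J ⟶ intervalModule F T I where
  app t := ModuleCat.ofHom (Submodule.inclusion (ite_top_bot_le_ite_top_bot (@hJI t)) :
      ↥(if t ∈ J then (⊤ : Submodule F F) else (⊥ : Submodule F F)) →ₗ[F]
        ↥(if t ∈ I then (⊤ : Submodule F F) else (⊥ : Submodule F F)))
  naturality s t f := by
    dsimp only [intervalModule]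
    by_cases hJst : Set.Icc s t ⊆ J
    · simp only [dif_pos hJst, dif_pos (hJst.trans hJI)]
      rfl
    simp only [dif_neg hJst, zero_comp]
    by_cases hIst : Set.Icc s t ⊆ I
    · exact ((intervalModule_obj_isZero F T J fun hs => hJst (hJ hs hIst)).eq_of_src _ _).symm
    · simp only [dif_neg hIst, comp_zero]

instance intervalModuleInclusion_mono_app {I J : Set T} (hJI : J ⊆ I)
    (hJ : ∀ ⦃s t⦄, s ∈ J → Set.Icc s t ⊆ I → Set.Icc s t ⊆ J) (t : T) :
    Mono ((intervalModuleInclusion F T hJI hJ).app t) := by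
  rw [ModuleCat.mono_iff_injective]
  exact Submodule.inclusion_injective (ite_top_bot_le_ite_top_bot (@hJI t))

noncomputable abbrev radInclusion (I : Set T) :
    intervalModule F T (radSet I) ⟶ intervalModule F T I :=
  intervalModuleInclusion F T (radSet_subset I) fun _ _ => Icc_subset_radSet

/-- The structure map `C(I)_s ⟶ C(I)_t`, `s < t`, with its codomain cut down to `C(rad I)_t`. -/
noncomputable def intervalModuleToRad (I : Set T) {s t : T} (hst : s < t) :
    (intervalModule F T I).obj s ⟶ (intervalModule F T (radSet I)).obj t :=
  ModuleCat.ofHom <| if h : Set.Icc s t ⊆ I then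
    Submodule.inclusion (ite_top_bot_le_ite_top_bot fun _ => mem_radSet_of_Icc_subset hst h)
  else 0

lemma intervalModuleToRad_comp_radInclusion (I : Set T) {s t : T} (hst : s < t) :
    intervalModuleToRad F T I hst ≫ (radInclusion F T I).app t =
      (intervalModule F T I).map (homOfLE hst.le) := by
  dsimp only [intervalModuleToRad, intervalModule]
  by_cases h : Set.Icc s t ⊆ I
  · simp only [dif_pos h]
    rfl
  · simp only [dif_neg h]
    rfl

lemma map_comp_intervalModuleToRad (I : Set T) {u v t : T} (huv : u ≤ v) (hvt : v < t) :
    (intervalModule F T I).map (homOfLE huv) ≫ intervalModuleToRad F T I hvt =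
      intervalModuleToRad F T I (huv.trans_lt hvt) := by
  rw [← cancel_mono ((radInclusion F T I).app t), Category.assoc,
    intervalModuleToRad_comp_radInclusion, intervalModuleToRad_comp_radInclusion,
    ← Functor.map_comp]
  rfl

lemma intervalModuleToRad_surjective (I : Set T) {s t : T} (hst : s < t)
    (h : Set.Icc s t ⊆ I) : Function.Surjective (intervalModuleToRad F T I hst) := by
  have hs : s ∈ I := h (Set.left_mem_Icc.mpr hst.le)
  dsimp only [intervalModuleToRad]
  rw [dif_pos h]
  intro y
  exact ⟨⟨y.1, by simp [hs]⟩, rfl⟩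

noncomputable def overlineToRadApp (I : Set T) (t : T) :
    (overlinePM F T (intervalModule F T I)).obj t ⟶ (intervalModule F T (radSet I)).obj t :=
  colimit.desc (downFunctor T t ⋙ intervalModule F T I)
    { pt := _
      ι :=
        { app := fun u => intervalModuleToRad F T I u.2
          naturality := fun _ v g =>
            (map_comp_intervalModuleToRad F T I (leOfHom g) v.2).trans (Category.comp_id _).symm } }

lemma overlineToRadApp_comp_radInclusion (I : Set T) (t : T) :
    overlineToRadApp F T I t ≫ (radInclusion F T I).app t =
      (fromOverline F T (intervalModule F T I)).app t := by
  apply colimit.hom_ext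
  intro u
  simp only [overlineToRadApp, fromOverline, colimit.ι_desc]
  exact (colimit.ι_desc_assoc _ _ _).trans (intervalModuleToRad_comp_radInclusion F T I u.2)

noncomputable def overlineToRad (I : Set T) :
    overlinePM F T (intervalModule F T I) ⟶ intervalModule F T (radSet I) :=
  NatTrans.liftOfMonoApp (radInclusion F T I) (fromOverline F T _) (overlineToRadApp F T I)
    (overlineToRadApp_comp_radInclusion F T I)

lemma overlineToRad_epi {I : Set T} (hI : IsInterval I) : Epi (overlineToRad F T I) := by
  have (t : T) : Epi ((overlineToRad F T I).app t) := by
    by_cases ht : t ∈ radSet I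
    · obtain ⟨s, hst, hsub⟩ := exists_Icc_subset_of_mem_radSet hI ht
      have hepi : Epi (intervalModuleToRad F T I hst) :=
        (ModuleCat.epi_iff_surjective _).mpr (intervalModuleToRad_surjective F T I hst hsub)
      exact @epi_of_epi_fac _ _ _ _ _ (colimit.ι _ ⟨s, hst⟩) _ _ hepi (colimit.ι_desc _ _)
    · exact (intervalModule_obj_isZero F T _ ht).epi _
  exact NatTrans.epi_of_epi_app _

/-- `rad(C(I))` is isomorphic to `C(rad I)` (as persistence modules). -/
theorem rad_intervalModule_iso (I : Set T) (hI : IsInterval I) :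
    Nonempty (radPM F T (intervalModule F T I) ≅ intervalModule F T (radSet I)) := by
  have := overlineToRad_epi F T hI
  have : StrongEpi (overlineToRad F T I) := strongEpi_of_epi _
  have : Mono (radInclusion F T I) := NatTrans.mono_of_mono_app _
  exact ⟨(image.isoStrongEpiMono (overlineToRad F T I) (radInclusion F T I)
    (NatTrans.liftOfMonoApp_comp _ _ _ _)).symm⟩
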